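/- arXiv:0712.1574 — 2 statements merged into one kernel-verified Lean document; each statement's English description precedes it below -/
import Mathlib

section
/- There exists an absolute constant C > 0 such that for every real y ≥ 2, setting s_y := 1 + 1/log y, one has ∑_{p ≤ y, p prime} (1/p − 1/p^{s_y}) + ∑_{p > y, p prime} 1/p^{s_y} ≤ C. -/
/-!
Both sums are controlled by the Mertens-type bound `∑_{p ≤ x} log p / p ≤ 4 log x`, which follows
from Chebyshev's `θ(x) ≤ x log 4` by halving `x`. Write `δ = 1 / log y`. Since
`1 - p^{-δ} ≤ δ log p`, the first sum is at most `δ ∑_{p ≤ y} log p / p ≤ 4`. For the second, the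
primes with `y^k ≤ p < y^{k+1}` satisfy `p^{-δ} ≤ e^{-k}` and `1 ≤ 2 log p / ((k + 1) log y)`, so
they contribute at most `8 e^{-k}`, and `∑ e^{-k}` converges.
-/

open Finset Real Chebyshev

theorem sum_primesLE_log_div_eq_zero_of_lt_two {x : ℝ} (hx : x < 2) :
    ∑ p ∈ Nat.primesLE ⌊x⌋₊, log p / p = 0 := by
  have hfloor : ⌊x⌋₊ < 2 := (Nat.floor_lt' two_ne_zero).mpr (by exact_mod_cast hx)
  refine sum_eq_zero fun p hp ↦ absurd ?_ (Nat.mem_primesLE.mp hp).2.two_le.not_gt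
  exact (Nat.mem_primesLE.mp hp).1.trans_lt hfloor

theorem sum_primesLE_log_div_le_sum_half_add {x : ℝ} (hx : 0 < x) :
    ∑ p ∈ Nat.primesLE ⌊x⌋₊, log p / p ≤ ∑ p ∈ Nat.primesLE ⌊x / 2⌋₊, log p / p + 2 * log 4 := by
  have hsub : Nat.primesLE ⌊x / 2⌋₊ ⊆ Nat.primesLE ⌊x⌋₊ :=
    Nat.primesLE_mono (Nat.floor_le_floor (by linarith))
  have hlarge : ∑ p ∈ Nat.primesLE ⌊x⌋₊ \ Nat.primesLE ⌊x / 2⌋₊, log p / p ≤ 2 * log 4 := calc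
    _ ≤ ∑ p ∈ Nat.primesLE ⌊x⌋₊ \ Nat.primesLE ⌊x / 2⌋₊, 2 / x * log p := by
      refine sum_le_sum fun p hp ↦ ?_
      obtain ⟨hp, hsmall⟩ := mem_sdiff.mp hp
      have hprime := (Nat.mem_primesLE.mp hp).2
      have hxp : x / 2 < p := by
        refine (Nat.floor_lt (by positivity)).mp ?_
        by_contra! h
        exact hsmall (Nat.mem_primesLE.mpr ⟨h, hprime⟩)
      have hp0 : (0 : ℝ) < p := by exact_mod_cast hprime.pos
      rw [div_eq_inv_mul]
      gcongr
      rw [inv_eq_one_div, div_le_div_iff₀ hp0 hx]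
      linarith
    _ ≤ 2 / x * θ x := by
      rw [← mul_sum, theta_eq_sum_primesLE]
      gcongr
      exact sdiff_subset
    _ ≤ 2 / x * (log 4 * x) := by gcongr; exact theta_le_log4_mul_x hx.le
    _ = 2 * log 4 := by field_simp
  rw [← sum_sdiff hsub]
  linarith

theorem sum_primesLE_log_div_le {x : ℝ} (hx : 1 ≤ x) :
    ∑ p ∈ Nat.primesLE ⌊x⌋₊, log p / p ≤ 4 * log x := by
  obtain ⟨n, hxn⟩ := pow_unbounded_of_one_lt x one_lt_two
  induction n generalizing x with
  | zero => simp at hxn; linarith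
  | succ n ih =>
    rcases lt_or_ge x 2 with hx2 | hx2
    · rw [sum_primesLE_log_div_eq_zero_of_lt_two hx2]
      exact mul_nonneg (by norm_num) (log_nonneg hx)
    · have hhalf := ih (x := x / 2) (by linarith) (by rw [pow_succ] at hxn; linarith)
      have hlog4 : log 4 = 2 * log 2 := by
        rw [show (4 : ℝ) = 2 ^ 2 by norm_num, log_pow, Nat.cast_ofNat]
      rw [log_div (by positivity) two_ne_zero] at hhalf
      linarith [sum_primesLE_log_div_le_sum_half_add (x := x) (by positivity)]

theorem one_div_sub_one_div_rpow_one_add_le {x : ℝ} (hx : 0 < x) (δ : ℝ) :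
    1 / x - 1 / x ^ (1 + δ) ≤ δ * (log x / x) := calc
  1 / x - 1 / x ^ (1 + δ) = (1 - (x ^ δ)⁻¹) / x := by
    rw [rpow_add hx, rpow_one]; field_simp
  _ ≤ log (x ^ δ) / x := by gcongr; exact one_sub_inv_le_log_of_pos (by positivity)
  _ = δ * (log x / x) := by rw [log_rpow hx]; ring

theorem sum_primesLE_one_div_sub_one_div_rpow_le {x δ : ℝ} (hx : 1 ≤ x) (hδ : 0 ≤ δ) :
    ∑ p ∈ Nat.primesLE ⌊x⌋₊, (1 / (p : ℝ) - 1 / (p : ℝ) ^ (1 + δ)) ≤ 4 * δ * log x := calc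
  _ ≤ ∑ p ∈ Nat.primesLE ⌊x⌋₊, δ * (log p / p) := sum_le_sum fun p hp ↦
    one_div_sub_one_div_rpow_one_add_le (by exact_mod_cast (Nat.mem_primesLE.mp hp).2.pos) δ
  _ ≤ δ * (4 * log x) := by rw [← mul_sum]; gcongr; exact sum_primesLE_log_div_le hx
  _ = 4 * δ * log x := by ring

theorem one_div_rpow_one_add_le_exp_neg_div {x δ : ℝ} (hx : 0 < x) {k : ℕ}
    (hk : k ≤ δ * log x) : 1 / x ^ (1 + δ) ≤ exp (-k) / x := calc
  1 / x ^ (1 + δ) = exp (-(δ * log x)) / x := by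
    rw [rpow_add hx, rpow_one, rpow_def_of_pos hx, exp_neg]; field_simp
  _ ≤ exp (-k) / x := by gcongr

theorem one_div_rpow_one_add_inv_log_le {x y : ℝ} (hy : 1 < y) (hyx : y < x) {k : ℕ}
    (hk : k ≤ logb y x) :
    1 / x ^ (1 + 1 / log y) ≤ 2 * exp (-k) / ((k + 1) * log y) * (log x / x) := by
  have hL : 0 < log y := log_pos hy
  have hx : 0 < x := by linarith
  have hlog : log y < log x := log_lt_log (by linarith) hyx
  rw [← log_div_log, le_div_iff₀ hL] at hk
  calc 1 / x ^ (1 + 1 / log y) ≤ exp (-k) / x :=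
        one_div_rpow_one_add_le_exp_neg_div hx (by rwa [one_div_mul_eq_div, le_div_iff₀ hL])
    _ ≤ exp (-k) / x * (2 * log x / ((k + 1) * log y)) := by
        refine le_mul_of_one_le_right (by positivity) ?_
        rw [one_le_div (by positivity)]
        linarith
    _ = 2 * exp (-k) / ((k + 1) * log y) * (log x / x) := by ring

theorem sum_one_div_rpow_of_floor_logb_eq_le {y : ℝ} (hy : 1 < y) (s : Finset ℕ) (k : ℕ) :
    ∑ n ∈ s with Nat.Prime n ∧ y < n ∧ ⌊logb y n⌋₊ = k, 1 / (n : ℝ) ^ (1 + 1 / log y) ≤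
      8 * exp (-k) := by
  have hL : 0 < log y := log_pos hy
  set c : ℝ := 2 * exp (-k) / ((k + 1) * log y)
  have hsub : s.filter (fun n : ℕ ↦ n.Prime ∧ y < n ∧ ⌊logb y n⌋₊ = k) ⊆
      Nat.primesLE ⌊y ^ (k + 1)⌋₊ := by
    intro n hn
    obtain ⟨-, hprime, hyn, hk⟩ := mem_filter.mp hn
    have hn : (n : ℝ) < y ^ ((k + 1 : ℕ) : ℝ) := by
      rw [← logb_lt_iff_lt_rpow hy (by linarith), ← hk]
      exact_mod_cast Nat.lt_floor_add_one _
    rw [rpow_natCast] at hn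
    exact Nat.mem_primesLE.mpr ⟨Nat.le_floor hn.le, hprime⟩
  calc _ ≤ ∑ n ∈ s with Nat.Prime n ∧ y < n ∧ ⌊logb y n⌋₊ = k, c * (log n / n) := by
        refine sum_le_sum fun n hn ↦ ?_
        obtain ⟨-, -, hyn, hk⟩ := mem_filter.mp hn
        refine one_div_rpow_one_add_inv_log_le hy hyn (hk ▸ Nat.floor_le ?_)
        exact logb_nonneg hy (by linarith)
    _ ≤ ∑ p ∈ Nat.primesLE ⌊y ^ (k + 1)⌋₊, c * (log p / p) :=
        sum_le_sum_of_subset_of_nonneg hsub fun p _ _ ↦ by positivity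
    _ ≤ c * (4 * log (y ^ (k + 1))) := by
        rw [← mul_sum]
        gcongr
        exact sum_primesLE_log_div_le (one_le_pow₀ hy.le)
    _ = 8 * exp (-k) := by
        simp only [c]
        rw [log_pow]
        push_cast
        field_simp
        ring

theorem tsum_primes_gt_one_div_rpow_le {y : ℝ} (hy : 1 < y) :
    (∑' p : Nat.Primes, if y < ((p : ℕ) : ℝ) then 1 / ((p : ℕ) : ℝ) ^ (1 + 1 / log y) else 0) ≤
      8 * ∑' k : ℕ, exp (-k) := by
  rw [Nat.Primes.tsum_eq_tsum_ite
    (fun n : ℕ ↦ if y < (n : ℝ) then 1 / (n : ℝ) ^ (1 + 1 / log y) else 0)]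
  refine Real.tsum_le_of_sum_range_le (fun n ↦ by positivity) fun N ↦ ?_
  set κ : ℕ → ℕ := fun n ↦ ⌊logb y n⌋₊
  have hfiber : ∀ k, ∑ n ∈ range N with κ n = k,
      (if n.Prime then if y < (n : ℝ) then 1 / (n : ℝ) ^ (1 + 1 / log y) else 0 else 0) =
      ∑ n ∈ range N with Nat.Prime n ∧ y < n ∧ ⌊logb y n⌋₊ = k,
        1 / (n : ℝ) ^ (1 + 1 / log y) := by
    intro k
    rw [sum_filter, sum_filter]
    refine sum_congr rfl fun n _ ↦ ?_
    split_ifs <;> simp_all [κ]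
  rw [← sum_fiberwise_of_maps_to (t := (range N).image κ) fun n hn ↦ mem_image_of_mem κ hn]
  calc _ ≤ ∑ k ∈ (range N).image κ, 8 * exp (-k) := sum_le_sum fun k _ ↦
        (hfiber k).trans_le (sum_one_div_rpow_of_floor_logb_eq_le hy _ k)
    _ ≤ 8 * ∑' k : ℕ, exp (-k) := by
        rw [← mul_sum]
        gcongr
        exact summable_exp_neg_nat.sum_le_tsum _ fun _ _ ↦ (exp_pos _).le

/-- **Prime-sum estimate in the proof of Lemma 3** (Goldmakher): There is an absolute
constant `C > 0` such that for every real `y ≥ 2`, with `s_y = 1 + 1/log y`,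
`∑_{p ≤ y} (1/p − 1/p^{s_y}) + ∑_{p > y} 1/p^{s_y} ≤ C`. -/
theorem prime_sum_sy_bounded :
    ∃ C : ℝ, 0 < C ∧
      ∀ y : ℝ, 2 ≤ y →
        (∑ p ∈ (Finset.Icc 1 ⌊y⌋₊).filter Nat.Prime,
            (1 / (p : ℝ) - 1 / (p : ℝ) ^ (1 + 1 / Real.log y))) +
          (∑' p : Nat.Primes,
            if y < ((p : ℕ) : ℝ) then 1 / ((p : ℕ) : ℝ) ^ (1 + 1 / Real.log y) else 0) ≤
        C := by
  refine ⟨4 + 8 * ∑' k : ℕ, exp (-k), by positivity, fun y hy ↦ ?_⟩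
  have hlog : 0 < log y := log_pos (by linarith)
  have hsmall := sum_primesLE_one_div_sub_one_div_rpow_le (x := y) (by linarith)
    (one_div_nonneg.mpr hlog.le)
  rw [mul_assoc, one_div_mul_cancel hlog.ne', mul_one, Nat.primesLE_eq_filter_Icc_one] at hsmall
  exact add_le_add hsmall (tsum_primes_gt_one_div_rpow_le (by linarith))
end

section
/- For any Dirichlet characters χ₁, χ₂, ψ₁, ψ₂ (with arbitrary moduli) and any real y ≥ 2, the triangle inequality 𝔻(χ₁, ψ₁; y) + 𝔻(χ₂, ψ₂; y) ≥ 𝔻(χ₁χ₂, ψ₁ψ₂; y) holds, where products of characters are taken pointwise (as characters modulo the lcm of the respective moduli). -/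
/-!
For `‖z‖, ‖w‖ ≤ 1` one has `√(1 - Re (z w)) ≤ √(1 - Re z) + √(1 - Re w)`, because
`(Im z)² ≤ 2 (1 - Re z)`. Taking `z = χ₁(p) conj ψ₁(p)` and `w = χ₂(p) conj ψ₂(p)`, whose product is
`(χ₁χ₂)(p) conj (ψ₁ψ₂)(p)`, and summing over `p` with Minkowski's inequality in `ℓ²` gives the
triangle inequality.
-/

open Finset Real

/-- The Granville–Soundararajan "distance" between Dirichlet characters `χ` mod `q` and
`ψ` mod `m` up to `y`: `𝔻(χ,ψ;y) = (∑_{p ≤ y} (1 − Re(χ(p) conj(ψ(p))))/p)^{1/2}`. -/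
noncomputable def gsDist {q m : ℕ} (χ : DirichletCharacter ℂ q)
    (ψ : DirichletCharacter ℂ m) (y : ℝ) : ℝ :=
  Real.sqrt (∑ p ∈ (Finset.Icc 1 ⌊y⌋₊).filter Nat.Prime,
    (1 - (χ (p : ZMod q) * (starRingEnd ℂ) (ψ (p : ZMod m))).re) / (p : ℝ))

theorem Real.sqrt_sum_add_sq_le {ι : Type*} (s : Finset ι) (a b : ι → ℝ) :
    √(∑ i ∈ s, (a i + b i) ^ 2) ≤ √(∑ i ∈ s, a i ^ 2) + √(∑ i ∈ s, b i ^ 2) := by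
  have hA : 0 ≤ ∑ i ∈ s, a i ^ 2 := sum_nonneg fun i _ ↦ sq_nonneg (a i)
  have hB : 0 ≤ ∑ i ∈ s, b i ^ 2 := sum_nonneg fun i _ ↦ sq_nonneg (b i)
  refine sqrt_le_iff.mpr ⟨by positivity, ?_⟩
  calc ∑ i ∈ s, (a i + b i) ^ 2
      = ∑ i ∈ s, a i ^ 2 + 2 * ∑ i ∈ s, a i * b i + ∑ i ∈ s, b i ^ 2 := by
        simp only [add_sq, sum_add_distrib, mul_sum, mul_assoc]
    _ ≤ ∑ i ∈ s, a i ^ 2 + 2 * (√(∑ i ∈ s, a i ^ 2) * √(∑ i ∈ s, b i ^ 2))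
          + ∑ i ∈ s, b i ^ 2 := by gcongr; exact sum_mul_le_sqrt_mul_sqrt s a b
    _ = (√(∑ i ∈ s, a i ^ 2) + √(∑ i ∈ s, b i ^ 2)) ^ 2 := by
        rw [add_sq, sq_sqrt hA, sq_sqrt hB, mul_assoc]

theorem Real.sqrt_sum_le_of_le_sqrt_add_sqrt_sq {ι : Type*} {s : Finset ι} {f g h : ι → ℝ}
    (hf : ∀ i ∈ s, 0 ≤ f i) (hg : ∀ i ∈ s, 0 ≤ g i)
    (hh : ∀ i ∈ s, h i ≤ (√(f i) + √(g i)) ^ 2) :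
    √(∑ i ∈ s, h i) ≤ √(∑ i ∈ s, f i) + √(∑ i ∈ s, g i) := by
  calc √(∑ i ∈ s, h i) ≤ √(∑ i ∈ s, (√(f i) + √(g i)) ^ 2) := sqrt_le_sqrt (sum_le_sum hh)
    _ ≤ √(∑ i ∈ s, √(f i) ^ 2) + √(∑ i ∈ s, √(g i) ^ 2) := sqrt_sum_add_sq_le s _ _
    _ = √(∑ i ∈ s, f i) + √(∑ i ∈ s, g i) := by
        rw [sum_congr rfl fun i hi ↦ sq_sqrt (hf i hi), sum_congr rfl fun i hi ↦ sq_sqrt (hg i hi)]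

theorem Complex.im_sq_le_two_mul_one_sub_re {z : ℂ} (hz : ‖z‖ ≤ 1) :
    z.im ^ 2 ≤ 2 * (1 - z.re) := by
  have hre : z.re ≤ 1 := (re_le_norm z).trans hz
  have hnorm : ‖z‖ ^ 2 ≤ 1 := pow_le_one₀ (norm_nonneg z) hz
  rw [← sq_norm_sub_sq_re]
  nlinarith

theorem Complex.one_sub_re_mul_le {z w : ℂ} (hz : ‖z‖ ≤ 1) (hw : ‖w‖ ≤ 1) :
    1 - (z * w).re ≤ (√(1 - z.re) + √(1 - w.re)) ^ 2 := by
  have hz₁ : 0 ≤ 1 - z.re := by linarith [re_le_norm z]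
  have hw₁ : 0 ≤ 1 - w.re := by linarith [re_le_norm w]
  have him : z.im * w.im ≤ 2 * (√(1 - z.re) * √(1 - w.re)) :=
    calc z.im * w.im ≤ √(z.im ^ 2) * √(w.im ^ 2) := by
          rw [sqrt_sq_eq_abs, sqrt_sq_eq_abs, ← abs_mul]; exact le_abs_self _
      _ ≤ √(2 * (1 - z.re)) * √(2 * (1 - w.re)) := by
          gcongr <;> exact im_sq_le_two_mul_one_sub_re ‹_›
      _ = 2 * (√(1 - z.re) * √(1 - w.re)) := by
          rw [sqrt_mul zero_le_two, sqrt_mul zero_le_two, mul_mul_mul_comm,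
            mul_self_sqrt zero_le_two]
  rw [mul_re, add_sq, sq_sqrt hz₁, sq_sqrt hw₁]
  nlinarith [mul_nonneg hz₁ hw₁]

theorem Complex.one_sub_re_mul_div_le {z w : ℂ} (hz : ‖z‖ ≤ 1) (hw : ‖w‖ ≤ 1) {c : ℝ}
    (hc : 0 ≤ c) :
    (1 - (z * w).re) / c ≤ (√((1 - z.re) / c) + √((1 - w.re) / c)) ^ 2 := by
  rw [sqrt_div' _ hc, sqrt_div' _ hc, ← add_div, div_pow, sq_sqrt hc]
  gcongr
  exact one_sub_re_mul_le hz hw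

namespace DirichletCharacter

theorem changeLevel_lcm_mul_apply {R : Type*} [CommMonoidWithZero R] {q₁ q₂ : ℕ}
    (χ₁ : DirichletCharacter R q₁) (χ₂ : DirichletCharacter R q₂) (n : ℕ) :
    (changeLevel (Nat.dvd_lcm_left q₁ q₂) χ₁ * changeLevel (Nat.dvd_lcm_right q₁ q₂) χ₂) n =
      χ₁ n * χ₂ n := by
  rw [MulChar.mul_apply]
  by_cases hn : n.Coprime (q₁.lcm q₂)
  · rw [← ZMod.coe_unitOfCoprime n hn, changeLevel_eq_cast_of_dvd, changeLevel_eq_cast_of_dvd,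
      ZMod.coe_unitOfCoprime, ZMod.cast_natCast (Nat.dvd_lcm_left q₁ q₂),
      ZMod.cast_natCast (Nat.dvd_lcm_right q₁ q₂)]
  · have h₁₂ : ¬ n.Coprime q₁ ∨ ¬ n.Coprime q₂ := by
      contrapose! hn
      exact (hn.1.mul_right hn.2).coprime_dvd_right (Nat.lcm_dvd_mul q₁ q₂)
    rw [MulChar.map_nonunit _ (mt (ZMod.isUnit_iff_coprime n _).mp hn), zero_mul]
    rcases h₁₂ with h | h
    · rw [MulChar.map_nonunit _ (mt (ZMod.isUnit_iff_coprime n _).mp h), zero_mul]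
    · rw [MulChar.map_nonunit _ (mt (ZMod.isUnit_iff_coprime n _).mp h), mul_zero]

theorem norm_mul_conj_le_one {q m : ℕ} (χ : DirichletCharacter ℂ q)
    (ψ : DirichletCharacter ℂ m) (a : ZMod q) (b : ZMod m) :
    ‖χ a * starRingEnd ℂ (ψ b)‖ ≤ 1 := by
  rw [norm_mul, RCLike.norm_conj]
  exact mul_le_one₀ (χ.norm_le_one a) (norm_nonneg _) (ψ.norm_le_one b)

end DirichletCharacter

theorem gsDist_triangle_general (q₁ q₂ m₁ m₂ : ℕ)
    (χ₁ : DirichletCharacter ℂ q₁) (χ₂ : DirichletCharacter ℂ q₂)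
    (ψ₁ : DirichletCharacter ℂ m₁) (ψ₂ : DirichletCharacter ℂ m₂)
    (y : ℝ) :
    gsDist
        (DirichletCharacter.changeLevel (Nat.dvd_lcm_left q₁ q₂) χ₁ *
          DirichletCharacter.changeLevel (Nat.dvd_lcm_right q₁ q₂) χ₂)
        (DirichletCharacter.changeLevel (Nat.dvd_lcm_left m₁ m₂) ψ₁ *
          DirichletCharacter.changeLevel (Nat.dvd_lcm_right m₁ m₂) ψ₂) y ≤
      gsDist χ₁ ψ₁ y + gsDist χ₂ ψ₂ y := by
  unfold gsDist
  have hterm_nonneg {q m : ℕ} (χ : DirichletCharacter ℂ q) (ψ : DirichletCharacter ℂ m) (p : ℕ) :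
      0 ≤ (1 - (χ p * starRingEnd ℂ (ψ p)).re) / p :=
    div_nonneg (sub_nonneg.mpr ((Complex.re_le_norm _).trans (χ.norm_mul_conj_le_one ψ _ _)))
      p.cast_nonneg
  refine sqrt_sum_le_of_le_sqrt_add_sqrt_sq (fun p _ ↦ hterm_nonneg χ₁ ψ₁ p)
    (fun p _ ↦ hterm_nonneg χ₂ ψ₂ p) fun p _ ↦ ?_
  rw [DirichletCharacter.changeLevel_lcm_mul_apply,
    DirichletCharacter.changeLevel_lcm_mul_apply, map_mul, mul_mul_mul_comm]
  exact Complex.one_sub_re_mul_div_le (χ₁.norm_mul_conj_le_one ψ₁ _ _)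
    (χ₂.norm_mul_conj_le_one ψ₂ _ _) p.cast_nonneg

/-- **Triangle inequality for the Granville–Soundararajan distance**: for Dirichlet
characters `χ₁, χ₂, ψ₁, ψ₂` (arbitrary moduli) and any real `y ≥ 2`,
`𝔻(χ₁,ψ₁;y) + 𝔻(χ₂,ψ₂;y) ≥ 𝔻(χ₁χ₂, ψ₁ψ₂; y)`, where products of characters are taken
modulo the lcm of the respective moduli. -/
theorem gsDist_triangle (q₁ q₂ m₁ m₂ : ℕ)
    (χ₁ : DirichletCharacter ℂ q₁) (χ₂ : DirichletCharacter ℂ q₂)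
    (ψ₁ : DirichletCharacter ℂ m₁) (ψ₂ : DirichletCharacter ℂ m₂)
    (y : ℝ) (hy : 2 ≤ y) :
    gsDist
        (DirichletCharacter.changeLevel (Nat.dvd_lcm_left q₁ q₂) χ₁ *
          DirichletCharacter.changeLevel (Nat.dvd_lcm_right q₁ q₂) χ₂)
        (DirichletCharacter.changeLevel (Nat.dvd_lcm_left m₁ m₂) ψ₁ *
          DirichletCharacter.changeLevel (Nat.dvd_lcm_right m₁ m₂) ψ₂) y ≤
      gsDist χ₁ ψ₁ y + gsDist χ₂ ψ₂ y :=
  gsDist_triangle_general q₁ q₂ m₁ m₂ χ₁ χ₂ ψ₁ ψ₂ y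
end
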